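/- Let E be a real normed vector space, p* ∈ E, C > 0, and let p : ℕ → E satisfy ‖p t − p*‖ ≤ C/t for every integer t ≥ 5. Let m : ℕ → E satisfy, for every integer t ≥ 5, m t = ((t−3)/(t+1)) • m(t−1) + (4/(t+1)) • p t, with arbitrary initial value m 4. Then there exists a constant K > 0 such that ‖m t − p*‖ ≤ K/t for every integer t ≥ 4; i.e., perturbation effects on the memory decay at rate O(1/t). -/

import Mathlib

/-!
The memory update is a convex combination of the previous memory and the new prediction, with
weights `(t - 3)/(t + 1)` and `4/(t + 1)`. Hence the distance `e t = ‖m t - p*‖` satisfies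
`e t ≤ (t - 3)/(t + 1) * e (t - 1) + 4/(t + 1) * C/t`, and a bound `e (t - 1) ≤ K/(t - 1)`
propagates to `e t ≤ K/t` as soon as `4 C ≤ 3 K`: the contraction factor `(t - 3)/(t + 1)` is
smaller than the ratio `(t - 1)/t` of consecutive bounds by about `3/t`, a gap that absorbs the
perturbation term `4 C/t²`. Taking `K = 4 (C + ‖m 4 - p*‖)` also covers the initial value.
-/

theorem norm_smul_add_smul_sub_le {E : Type*} [SeminormedAddCommGroup E] [NormedSpace ℝ E]
    {a b : ℝ} (ha : 0 ≤ a) (hb : 0 ≤ b) (hab : a + b = 1) (x y z : E) :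
    ‖a • x + b • y - z‖ ≤ a * ‖x - z‖ + b * ‖y - z‖ := by
  have hsplit : a • x + b • y - z = a • (x - z) + b • (y - z) := by
    rw [smul_sub, smul_sub, sub_add_sub_comm, ← add_smul, hab, one_smul]
  rw [hsplit]
  calc ‖a • (x - z) + b • (y - z)‖ ≤ ‖a • (x - z)‖ + ‖b • (y - z)‖ := norm_add_le _ _
    _ = a * ‖x - z‖ + b * ‖y - z‖ := by
      rw [norm_smul, norm_smul, Real.norm_of_nonneg ha, Real.norm_of_nonneg hb]

theorem memory_step_le_div {t C K : ℝ} (ht : 1 < t) (hK : 0 ≤ K) (hCK : 4 * C ≤ 3 * K) :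
    (t - 3) / (t + 1) * (K / (t - 1)) + 4 / (t + 1) * (C / t) ≤ K / t := by
  have ht0 : 0 < t := by linarith
  have ht1 : 0 < t - 1 := by linarith
  have ht2 : 0 < t + 1 := by linarith
  -- after clearing denominators the claim is `4 C (t - 1) ≤ K (3 t - 1)`
  rw [div_mul_div_comm, div_mul_div_comm, div_add_div _ _ (by positivity) (by positivity),
    div_le_div_iff₀ (by positivity) ht0]
  nlinarith [mul_nonneg (mul_nonneg ht0.le ht2.le) (mul_nonneg ht1.le (by linarith : 0 ≤ 2 * K)),
    mul_le_mul_of_nonneg_right hCK (mul_nonneg (mul_nonneg ht0.le ht1.le) ht2.le)]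

theorem le_div_of_memory_recursion {e : ℕ → ℝ} {C K : ℝ} (hK : 0 ≤ K) (hCK : 4 * C ≤ 3 * K)
    (h4 : e 4 ≤ K / 4)
    (he : ∀ t : ℕ, 5 ≤ t →
      e t ≤ ((t : ℝ) - 3) / ((t : ℝ) + 1) * e (t - 1) + 4 / ((t : ℝ) + 1) * (C / t)) :
    ∀ t : ℕ, 4 ≤ t → e t ≤ K / t := by
  intro t ht
  induction t, ht using Nat.le_induction with
  | base => exact_mod_cast h4
  | succ n hn ih =>
    have hn' : (4 : ℝ) ≤ n := by exact_mod_cast hn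
    have hstep := he (n + 1) (by omega)
    push_cast at hstep ⊢
    calc e (n + 1)
        ≤ (n + 1 - 3) / (n + 1 + 1) * e n + 4 / (n + 1 + 1) * (C / (n + 1)) := hstep
      _ ≤ (n + 1 - 3) / (n + 1 + 1) * (K / n) + 4 / (n + 1 + 1) * (C / (n + 1)) := by
          gcongr
          exact div_nonneg (by linarith) (by linarith)
      _ ≤ K / (n + 1) := by
          simpa using memory_step_le_div (t := n + 1) (by linarith) hK hCK

/-- `O(1/t)` decay of perturbation effects: if the prediction perturbations
satisfy `‖p t − p*‖ ≤ C/t` for `t ≥ 5`, then the immediate memory unit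
satisfies `‖m t − p*‖ ≤ K/t` for all `t ≥ 4`, for some constant `K > 0`. -/
theorem memory_perturbation_O_inv_t
    {E : Type*} [NormedAddCommGroup E] [NormedSpace ℝ E]
    (pstar : E) (C : ℝ) (hC : 0 < C) (p m : ℕ → E)
    (hp : ∀ t : ℕ, 5 ≤ t → ‖p t - pstar‖ ≤ C / (t : ℝ))
    (hm : ∀ t : ℕ, 5 ≤ t →
      m t = (((t : ℝ) - 3) / ((t : ℝ) + 1)) • m (t - 1)
        + ((4 : ℝ) / ((t : ℝ) + 1)) • p t) :
    ∃ K : ℝ, 0 < K ∧ ∀ t : ℕ, 4 ≤ t → ‖m t - pstar‖ ≤ K / (t : ℝ) := by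
  have hd4 := norm_nonneg (m 4 - pstar)
  refine ⟨4 * (C + ‖m 4 - pstar‖), by positivity,
    le_div_of_memory_recursion (C := C) (by positivity) (by linarith) (by linarith) fun t ht => ?_⟩
  have ht' : (5 : ℝ) ≤ t := by exact_mod_cast ht
  have ha : 0 ≤ ((t : ℝ) - 3) / ((t : ℝ) + 1) := div_nonneg (by linarith) (by linarith)
  have hb : 0 ≤ (4 : ℝ) / ((t : ℝ) + 1) := div_nonneg (by norm_num) (by linarith)
  have hab : ((t : ℝ) - 3) / ((t : ℝ) + 1) + 4 / ((t : ℝ) + 1) = 1 := by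
    field_simp
    ring
  rw [hm t ht]
  grw [norm_smul_add_smul_sub_le ha hb hab, hp t ht]
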